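/- Fix s ∈ (1/2, 1) and a cutoff η as in the definition of I_N. There is a constant C > 0 (depending only on s, η) such that for every N ≥ 1 and every Schwartz function g : ℝ³ → ℂ, ‖g‖²_{H^s(ℝ³)} ≤ C ( E(I_N g) + ‖g‖²_{L²(ℝ³)} ). -/

import Mathlib

open MeasureTheory Real Complex Filter
open scoped FourierTransform ContDiff ENNReal

noncomputable section

abbrev E3 := EuclideanSpace ℝ (Fin 3)

/-- the `i`-th standard basis vector of `ℝ³`. -/
def e3 (i : Fin 3) : E3 := EuclideanSpace.single i (1 : ℝ)

/-- the `i`-th spatial partial derivative. -/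
def pd (g : E3 → ℂ) (i : Fin 3) (x : E3) : ℂ := fderiv ℝ g x (e3 i)

/-- the (spatial) Laplacian. -/
def lap (g : E3 → ℂ) (x : E3) : ℂ := ∑ i : Fin 3, fderiv ℝ (fun y => pd g i y) x (e3 i)

/-- the antiderivative `F(z) = ∫₀^z f(s) ds` of `f`. -/
def Fa (f : ℝ → ℝ) (z : ℝ) : ℝ := ∫ s in (0:ℝ)..z, f s

/-- `u` is a smooth decaying solution of the gNLS `i ∂ₜ u + α Δ u = μ f(|u|²) u`
on `[0,T] × ℝ³`: it is jointly smooth, every time derivative slice is a Schwartz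
function of `x`, and the equation holds pointwise on `[0,T] × ℝ³`. -/
structure IsSolution (α μ : ℝ) (f : ℝ → ℝ) (T : ℝ) (u : ℝ → E3 → ℂ) : Prop where
  smooth : ContDiff ℝ ∞ (fun p : ℝ × E3 => u p.1 p.2)
  schwartz : ∀ (k : ℕ) (t : ℝ), ∃ g : SchwartzMap E3 ℂ,
      ∀ x, iteratedDeriv k (fun s => u s x) t = g x
  eqn : ∀ t ∈ Set.Icc (0:ℝ) T, ∀ x : E3,
      Complex.I * deriv (fun s => u s x) t + (α : ℂ) * lap (u t) x
        = ((μ * f (Complex.normSq (u t x)) : ℝ) : ℂ) * u t x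

/-- the `i`-th component of the mass current `Im (conj u ∇u)`. -/
def massCur (g : E3 → ℂ) (i : Fin 3) (x : E3) : ℝ := ((starRingEnd ℂ) (g x) * pd g i x).im

/-- the Morawetz action centered at `y`. -/
def morAction (g : E3 → ℂ) (y : E3) : ℝ :=
  ∫ x : E3, ∑ i : Fin 3, massCur g i x * ((x i - y i) / ‖x - y‖)

/-- `|∇̸_y g(x)|²`, the squared norm of the angular part of the gradient. -/
def angGradSq (g : E3 → ℂ) (y x : E3) : ℝ :=
  ∑ i : Fin 3, Complex.normSq (pd g i x -
    (((x i - y i) / ‖x - y‖ : ℝ) : ℂ) *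
      ∑ j : Fin 3, (((x j - y j) / ‖x - y‖ : ℝ) : ℂ) * pd g j x)

/-- squared homogeneous Sobolev norm `‖g‖²_{Ḣ^σ}`. -/
def sobSq (σ : ℝ) (g : E3 → ℂ) : ℝ := ∫ ξ : E3, ‖ξ‖ ^ (2 * σ) * ‖𝓕 g ξ‖ ^ 2


/-- `η` is an admissible cutoff for the smoothing operator `I_N` at regularity `s`:
a smooth nonincreasing function on `[0,∞)` with values in `(0,1]`, equal to `1` for
`r ≤ 1` and to `r^{s−1}` for `r ≥ 2`. -/
def IsCutoff (s : ℝ) (η : ℝ → ℝ) : Prop :=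
  ContDiff ℝ ∞ η ∧ AntitoneOn η (Set.Ici 0) ∧ (∀ r ≥ (0:ℝ), 0 < η r ∧ η r ≤ 1) ∧
    (∀ r ≤ (1:ℝ), η r = 1) ∧ (∀ r ≥ (2:ℝ), η r = r ^ (s - 1))

/-- the smoothing operator `I_N`, a Fourier multiplier with symbol `η(|ξ|/N)`. -/
def Iop (η : ℝ → ℝ) (N : ℝ) (g : E3 → ℂ) : E3 → ℂ :=
  fun x => 𝓕⁻ (fun ξ : E3 => (η (‖ξ‖ / N) : ℂ) * 𝓕 g ξ) x

/-- the Littlewood–Paley type projection `P_M`, a Fourier multiplier with symbol `ψ(ξ/M)`. -/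
def PM (ψ : E3 → ℝ) (M : ℝ) (g : E3 → ℂ) : E3 → ℂ :=
  fun x => 𝓕⁻ (fun ξ : E3 => (ψ (M⁻¹ • ξ) : ℂ) * 𝓕 g ξ) x

/-- pointwise norm `|∇g(x)|` of the spatial gradient. -/
def gradNorm (g : E3 → ℂ) (x : E3) : ℝ := Real.sqrt (∑ i : Fin 3, Complex.normSq (pd g i x))

/-- `(q,r)` is a Schrödinger admissible pair for `ℝ^{3+1}`: `q, r ≥ 2` and
`1/q + 3/(2r) = 3/4`. -/
def SAdmissible (q r : ℝ≥0∞) : Prop := 2 ≤ q ∧ 2 ≤ r ∧ 1 / q + 3 / (2 * r) = 3 / 4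

/-- the mixed spacetime norm `‖G‖_{L^q_t L^r_x([0,T] × ℝ³)}` (of a scalar function). -/
def LqLr (q r : ℝ≥0∞) (T : ℝ) (G : ℝ → E3 → ℝ) : ℝ≥0∞ :=
  eLpNorm (fun t => (eLpNorm (G t) r volume).toReal) q (volume.restrict (Set.Icc (0:ℝ) T))

/-- `Z = sup_{(q,r) admissible} ‖∇ I_N φ‖_{L^q_t L^r_x([0,T] × ℝ³)}`. -/
def Znorm (η : ℝ → ℝ) (N T : ℝ) (φ : ℝ → E3 → ℂ) : ℝ≥0∞ :=
  ⨆ (q : ℝ≥0∞) (r : ℝ≥0∞) (_ : SAdmissible q r),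
    LqLr q r T (fun t x => gradNorm (Iop η N (φ t)) x)

/-- the modified energy `E(w) = ∫ (1/2)|∇w|² + (1/4)|w|⁴ dx`. -/
def energyE (w : E3 → ℂ) : ℝ :=
  ∫ x : E3, (1/2) * (∑ i : Fin 3, Complex.normSq (pd w i x)) + (1/4) * ‖w x‖ ^ 4

/-- squared inhomogeneous Sobolev norm `‖g‖²_{H^s}`. -/
def inhomSobSq (s : ℝ) (g : E3 → ℂ) : ℝ :=
  ∫ ξ : E3, (1 + ‖ξ‖ ^ 2) ^ s * ‖𝓕 g ξ‖ ^ 2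

/-!
On the Fourier side `I_N g` has transform `η(|ξ|/N) ĝ`, and Plancherel together with
`𝓕(∂ⱼ w)(ξ) = 2πi ξⱼ ŵ(ξ)` shows that twice the energy of `w = I_N g` dominates
`4π² ∫ η(|ξ|/N)² |ξ|² |ĝ|²`. Since `η(r) ≥ r^{s-1}/2` for `r ≥ 1` and `N ≥ 1`, the Sobolev weight
satisfies `(1 + |ξ|²)^s ≤ 2 + 8 η(|ξ|/N)² |ξ|²`, so `C = 4` works. The symbol `η(|ξ|/N)` has
temperate growth (it is smooth as a function of `|ξ|²`, and outside `N² ≤ |ξ|² ≤ 4N²` it is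
constant or a negative power of `|ξ|²`), so `I_N g` is again a Schwartz function.
-/

open SchwartzMap LineDeriv
open scoped RealInnerProductSpace

section Plancherel

variable {E H : Type*} [NormedAddCommGroup E] [InnerProductSpace ℝ E] [FiniteDimensional ℝ E]
  [MeasurableSpace E] [BorelSpace E] [NormedAddCommGroup H]

theorem SchwartzMap.integrable_norm_sq [NormedSpace ℝ H] (f : 𝓢(E, H)) :
    Integrable (fun x => ‖f x‖ ^ 2) := by
  simpa using (f.memLp 2).integrable_norm_pow two_ne_zero

theorem SchwartzMap.norm_fourier_lineDerivOp [NormedSpace ℂ H] (f : 𝓢(E, H)) (m ξ : E) :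
    ‖𝓕 (∂_{m} f) ξ‖ = 2 * π * |⟪ξ, m⟫| * ‖𝓕 f ξ‖ := by
  have : (inner ℝ · m).HasTemperateGrowth := by fun_prop
  rw [fourier_lineDerivOp_eq, smul_apply, smulLeftCLM_apply_apply this, norm_smul, norm_smul]
  simp [abs_of_pos pi_pos, mul_assoc]

theorem SchwartzMap.sum_norm_sq_fourier_lineDerivOp [NormedSpace ℂ H] {ι : Type*} [Fintype ι]
    (b : OrthonormalBasis ι ℝ E) (f : 𝓢(E, H)) (ξ : E) :
    ∑ i, ‖𝓕 (∂_{b i} f) ξ‖ ^ 2 = (2 * π) ^ 2 * ‖ξ‖ ^ 2 * ‖𝓕 f ξ‖ ^ 2 := by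
  simp_rw [norm_fourier_lineDerivOp, mul_pow, sq_abs, ← Finset.sum_mul, ← Finset.mul_sum,
    b.sum_sq_inner_left]

theorem SchwartzMap.integrable_norm_sq_mul_norm_sq_fourier [NormedSpace ℂ H] (f : 𝓢(E, H)) :
    Integrable (fun ξ => ‖ξ‖ ^ 2 * ‖𝓕 f ξ‖ ^ 2) := by
  let b := stdOrthonormalBasis ℝ E
  refine ((integrable_finsetSum Finset.univ fun i _ =>
    (𝓕 (∂_{b i} f)).integrable_norm_sq).const_mul ((2 * π) ^ 2)⁻¹).congr (ae_of_all _ fun ξ => ?_)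
  dsimp only
  rw [sum_norm_sq_fourier_lineDerivOp b f ξ]
  field_simp

theorem SchwartzMap.integral_sum_norm_sq_lineDerivOp [InnerProductSpace ℂ H] [CompleteSpace H]
    {ι : Type*} [Fintype ι] (b : OrthonormalBasis ι ℝ E) (f : 𝓢(E, H)) :
    ∫ x, ∑ i, ‖∂_{b i} f x‖ ^ 2 = (2 * π) ^ 2 * ∫ ξ, ‖ξ‖ ^ 2 * ‖𝓕 f ξ‖ ^ 2 := by
  rw [integral_finsetSum _ fun i _ => (∂_{b i} f).integrable_norm_sq,
    Finset.sum_congr rfl fun i _ => (integral_norm_sq_fourier (∂_{b i} f)).symm,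
    ← integral_finsetSum _ fun i _ => (𝓕 (∂_{b i} f)).integrable_norm_sq,
    ← integral_const_mul]
  simp_rw [sum_norm_sq_fourier_lineDerivOp, mul_assoc]

theorem SchwartzMap.norm_fourier_fourierMultiplierCLM [InnerProductSpace ℂ H] [CompleteSpace H]
    {a : E → ℝ} (ha : a.HasTemperateGrowth) (f : 𝓢(E, H)) (ξ : E) :
    ‖𝓕 (fourierMultiplierCLM H a f) ξ‖ = |a ξ| * ‖𝓕 f ξ‖ := by
  rw [fourierMultiplierCLM_apply, FourierTransform.fourier_fourierInv_eq,
    smulLeftCLM_apply_apply ha, norm_smul, Real.norm_eq_abs]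

end Plancherel

theorem exists_bound_of_bounded_off_Icc {F : Type*} [NormedAddCommGroup F] {f : ℝ → F}
    (hf : Continuous f) {a b C : ℝ} (h : ∀ t, t < a ∨ b < t → ‖f t‖ ≤ C) :
    ∃ C', ∀ t, ‖f t‖ ≤ C' := by
  obtain ⟨C₁, hC₁⟩ :=
    (isCompact_Icc (a := a) (b := b)).exists_bound_of_continuousOn hf.continuousOn
  refine ⟨max C₁ C, fun t => ?_⟩
  by_cases ht : t ∈ Set.Icc a b
  · exact (hC₁ t ht).trans (le_max_left _ _)
  · rw [Set.mem_Icc, not_and_or, not_le, not_le] at ht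
    exact (h t ht).trans (le_max_right _ _)

/-- The symbol of `I_N` as a function of `t = ‖ξ‖ ^ 2`: `η (‖ξ‖ / N) = cutoffProfile η N (‖ξ‖ ^ 2)`.
It is smooth on all of `ℝ` since `η` is constant near `0`, so temperate growth of the symbol
follows by composition with `‖·‖ ^ 2`. -/
def cutoffProfile (η : ℝ → ℝ) (N t : ℝ) : ℝ := η (√t / N)

section CutoffProfile

variable {s : ℝ} {η : ℝ → ℝ} {N t : ℝ}

theorem cutoffProfile_eq_one (hη : IsCutoff s η) (hN : 0 < N) (ht : t ≤ N ^ 2) :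
    cutoffProfile η N t = 1 := by
  refine hη.2.2.2.1 _ ((div_le_one hN).2 ?_)
  simpa [Real.sqrt_sq hN.le] using Real.sqrt_le_sqrt ht

theorem cutoffProfile_eq_rpow (hη : IsCutoff s η) (hN : 0 < N) (ht : 4 * N ^ 2 ≤ t) :
    cutoffProfile η N t = N ^ (1 - s) * t ^ ((s - 1) / 2) := by
  have ht0 : 0 ≤ t := le_trans (by positivity) ht
  have h2 : 2 ≤ √t / N := by
    rw [le_div_iff₀ hN]
    calc 2 * N = √(4 * N ^ 2) := by
          rw [show 4 * N ^ 2 = (2 * N) ^ 2 by ring, Real.sqrt_sq (by positivity)]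
      _ ≤ √t := Real.sqrt_le_sqrt ht
  rw [cutoffProfile, hη.2.2.2.2 _ h2, Real.div_rpow (Real.sqrt_nonneg t) hN.le,
    Real.sqrt_eq_rpow, ← Real.rpow_mul ht0, div_eq_inv_mul, ← Real.rpow_neg hN.le, neg_sub]
  ring_nf

theorem contDiff_cutoffProfile (hη : IsCutoff s η) (hN : 0 < N) :
    ContDiff ℝ ∞ (cutoffProfile η N) := by
  refine contDiff_iff_contDiffAt.2 fun t => ?_
  rcases lt_or_ge t (N ^ 2) with ht | ht
  · refine (contDiffAt_const (c := (1 : ℝ))).congr_of_eventuallyEq ?_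
    filter_upwards [Iio_mem_nhds ht] with u hu using cutoffProfile_eq_one hη hN hu.le
  · have ht0 : t ≠ 0 := (lt_of_lt_of_le (by positivity) ht).ne'
    exact hη.1.contDiffAt.comp t ((contDiffAt_sqrt ht0).div_const N)

/-- Away from the transition region `[N², 4N²]` the profile is either constant or a multiple of
the power `t ^ ((s - 1) / 2)`, whose derivatives are bounded there when `s ≤ 1`. -/
theorem exists_bound_iteratedDeriv_cutoffProfile (hη : IsCutoff s η) (hs : s ≤ 1) (hN : 0 < N)
    (n : ℕ) : ∃ C, ∀ t, ‖iteratedDeriv n (cutoffProfile η N) t‖ ≤ C := by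
  have hcont := (contDiff_cutoffProfile hη hN).continuous_iteratedDeriv n (mod_cast le_top)
  set a := (s - 1) / 2
  set c := N ^ (1 - s) * (descPochhammer ℝ n).eval a
  refine exists_bound_of_bounded_off_Icc hcont (a := N ^ 2) (b := 4 * N ^ 2)
    (C := max 1 (|c| * (4 * N ^ 2) ^ (a - n))) fun t ht => ?_
  rcases ht with ht | ht
  · have hev : cutoffProfile η N =ᶠ[nhds t] fun _ => 1 := by
      filter_upwards [Iio_mem_nhds ht] with u hu using cutoffProfile_eq_one hη hN hu.le
    rw [hev.iteratedDeriv_eq, iteratedDeriv_const]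
    split_ifs <;> simp
  · have hev : cutoffProfile η N =ᶠ[nhds t] fun u => N ^ (1 - s) * u ^ a := by
      filter_upwards [Ioi_mem_nhds ht] with u hu using cutoffProfile_eq_rpow hη hN hu.le
    have h4N : 0 < 4 * N ^ 2 := by positivity
    rw [hev.iteratedDeriv_eq, iteratedDeriv_const_mul_field, iteratedDeriv_eq_iterate,
      Real.iter_deriv_rpow_const, ← mul_assoc, norm_mul, Real.norm_eq_abs, Real.norm_eq_abs,
      abs_of_pos (Real.rpow_pos_of_pos (h4N.trans ht) _)]
    refine le_max_of_le_right (mul_le_mul_of_nonneg_left ?_ (abs_nonneg _))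
    exact Real.rpow_le_rpow_of_nonpos h4N ht.le
      (by simp only [a]; linarith [n.cast_nonneg (α := ℝ)])

theorem hasTemperateGrowth_cutoffProfile (hη : IsCutoff s η) (hs : s ≤ 1) (hN : 0 < N) :
    (cutoffProfile η N).HasTemperateGrowth := by
  refine ⟨contDiff_cutoffProfile hη hN, fun n => ?_⟩
  obtain ⟨C, hC⟩ := exists_bound_iteratedDeriv_cutoffProfile hη hs hN n
  exact ⟨0, C, fun t => by simpa [norm_iteratedFDeriv_eq_norm_iteratedDeriv] using hC t⟩

theorem hasTemperateGrowth_cutoff_norm_div {E : Type*} [NormedAddCommGroup E]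
    [InnerProductSpace ℝ E] (hη : IsCutoff s η) (hs : s ≤ 1) (hN : 0 < N) :
    (fun ξ : E => η (‖ξ‖ / N)).HasTemperateGrowth := by
  convert (hasTemperateGrowth_cutoffProfile hη hs hN).comp
    (Function.hasTemperateGrowth_norm_sq E) using 1
  ext ξ
  simp [cutoffProfile, Real.sqrt_sq (norm_nonneg ξ)]

end CutoffProfile

section Symbol

variable {s : ℝ} {η : ℝ → ℝ}

theorem IsCutoff.rpow_le_two_mul (hη : IsCutoff s η) (hs0 : 0 ≤ s) (hs1 : s ≤ 1) {r : ℝ}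
    (hr : 1 ≤ r) : r ^ (s - 1) ≤ 2 * η r := by
  have hpos := (hη.2.2.1 r (by linarith)).1
  rcases le_total 2 r with h2 | h2
  · rw [← hη.2.2.2.2 r h2]; linarith
  · have hmono : η 2 ≤ η r := hη.2.1 (Set.mem_Ici.2 (by linarith)) (Set.mem_Ici.2 zero_le_two) h2
    have hhalf : (2 : ℝ) ^ (-1 : ℝ) ≤ 2 ^ (s - 1) :=
      Real.rpow_le_rpow_of_exponent_le one_le_two (by linarith)
    rw [hη.2.2.2.2 2 le_rfl] at hmono
    rw [Real.rpow_neg_one] at hhalf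
    have : r ^ (s - 1) ≤ 1 := Real.rpow_le_one_of_one_le_of_nonpos hr (by linarith)
    linarith [show (2 : ℝ)⁻¹ = 1 / 2 by norm_num]

theorem IsCutoff.rpow_le_two_mul_div (hη : IsCutoff s η) (hs0 : 0 ≤ s) (hs1 : s ≤ 1) {N t : ℝ}
    (hN : 1 ≤ N) (ht : 1 ≤ t) : t ^ (s - 1) ≤ 2 * η (t / N) := by
  have hN0 : 0 < N := by linarith
  rcases le_total t N with htN | htN
  · rw [hη.2.2.2.1 _ ((div_le_one hN0).2 htN)]
    linarith [Real.rpow_le_one_of_one_le_of_nonpos ht (by linarith : s - 1 ≤ 0)]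
  · have h1 : 1 ≤ t / N := (one_le_div hN0).2 htN
    calc t ^ (s - 1) ≤ (t / N) ^ (s - 1) :=
          Real.rpow_le_rpow_of_nonpos (by linarith) (div_le_self (by linarith) hN) (by linarith)
      _ ≤ 2 * η (t / N) := hη.rpow_le_two_mul hs0 hs1 h1

theorem IsCutoff.one_add_sq_rpow_le (hη : IsCutoff s η) (hs0 : 0 ≤ s) (hs1 : s ≤ 1) {N t : ℝ}
    (hN : 1 ≤ N) (ht : 0 ≤ t) : (1 + t ^ 2) ^ s ≤ 2 + 8 * η (t / N) ^ 2 * t ^ 2 := by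
  have h2s : (2 : ℝ) ^ s ≤ 2 := by
    simpa using Real.rpow_le_rpow_of_exponent_le one_le_two hs1
  rcases le_total t 1 with ht1 | ht1
  · have : (1 + t ^ 2) ^ s ≤ 2 ^ s := Real.rpow_le_rpow (by positivity) (by nlinarith) hs0
    nlinarith [sq_nonneg (η (t / N) * t)]
  · have hts : t ^ s ≤ 2 * η (t / N) * t := by
      have := hη.rpow_le_two_mul_div hs0 hs1 hN ht1
      rw [Real.rpow_sub_one (by linarith), div_le_iff₀ (by linarith)] at this
      exact this
    calc (1 + t ^ 2) ^ s ≤ (2 * t ^ 2) ^ s := Real.rpow_le_rpow (by positivity) (by nlinarith) hs0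
      _ = 2 ^ s * (t ^ s) ^ 2 := by
          rw [Real.mul_rpow zero_le_two (by positivity), Real.rpow_pow_comm ht]
      _ ≤ 2 * (2 * η (t / N) * t) ^ 2 := by
          gcongr
      _ ≤ 2 + 8 * η (t / N) ^ 2 * t ^ 2 := by nlinarith

end Symbol

theorem pd_eq_lineDerivOp (f : 𝓢(E3, ℂ)) (i : Fin 3) :
    pd f i = ∂_{EuclideanSpace.basisFun (Fin 3) ℝ i} f := by
  ext x
  rw [EuclideanSpace.basisFun_apply]
  rfl

theorem integral_sum_norm_sq_lineDerivOp_le_energyE (w : 𝓢(E3, ℂ)) :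
    ∫ x, ∑ i, ‖∂_{EuclideanSpace.basisFun (Fin 3) ℝ i} w x‖ ^ 2 ≤ 2 * energyE w := by
  have hgrad : Integrable fun x => ∑ i, ‖∂_{EuclideanSpace.basisFun (Fin 3) ℝ i} w x‖ ^ 2 :=
    integrable_finsetSum _ fun i _ =>
      (∂_{EuclideanSpace.basisFun (Fin 3) ℝ i} w).integrable_norm_sq
  have hquartic : Integrable fun x => ‖w x‖ ^ 4 := by
    simpa using (w.memLp 4).integrable_norm_pow four_ne_zero
  rw [energyE, ← integral_const_mul]
  simp only [Complex.normSq_eq_norm_sq, pd_eq_lineDerivOp]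
  refine integral_mono hgrad (((hgrad.const_mul _).add (hquartic.const_mul _)).const_mul 2)
    fun x => ?_
  dsimp only
  nlinarith [sq_nonneg (‖w x‖ ^ 2)]

theorem Iop_eq_fourierMultiplierCLM {η : ℝ → ℝ} {N : ℝ}
    (hm : (fun ξ : E3 => η (‖ξ‖ / N)).HasTemperateGrowth) (g : 𝓢(E3, ℂ)) :
    Iop η N g = fourierMultiplierCLM ℂ (fun ξ : E3 => η (‖ξ‖ / N)) g := by
  ext x
  rw [fourierMultiplierCLM_apply, fourierInv_coe, smulLeftCLM_apply hm, Iop]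
  simp [fourier_coe, Complex.real_smul]

theorem IsCutoff.inhomSobSq_le {s : ℝ} {η : ℝ → ℝ} (hη : IsCutoff s η) (hs0 : 0 ≤ s)
    (hs1 : s ≤ 1) {N : ℝ} (hN : 1 ≤ N) (g : 𝓢(E3, ℂ)) :
    inhomSobSq s g ≤ 2 * (∫ ξ, ‖𝓕 g ξ‖ ^ 2)
      + 8 * ∫ ξ, ‖ξ‖ ^ 2 * ‖𝓕 (fourierMultiplierCLM ℂ (fun ξ : E3 => η (‖ξ‖ / N)) g) ξ‖ ^ 2 := by
  have hm := hasTemperateGrowth_cutoff_norm_div (E := E3) hη hs1 (by linarith : 0 < N)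
  set w := fourierMultiplierCLM ℂ (fun ξ : E3 => η (‖ξ‖ / N)) g
  have hweight (ξ : E3) : (1 + ‖ξ‖ ^ 2) ^ s * ‖𝓕 g ξ‖ ^ 2
      ≤ 2 * ‖𝓕 g ξ‖ ^ 2 + 8 * (‖ξ‖ ^ 2 * ‖𝓕 w ξ‖ ^ 2) := by
    have := mul_le_mul_of_nonneg_right
      (hη.one_add_sq_rpow_le hs0 hs1 hN (norm_nonneg ξ)) (sq_nonneg ‖𝓕 g ξ‖)
    rw [norm_fourier_fourierMultiplierCLM hm, abs_of_pos (hη.2.2.1 _ (by positivity)).1]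
    linarith
  have hmass := (𝓕 g).integrable_norm_sq.const_mul 2
  have hgrad := w.integrable_norm_sq_mul_norm_sq_fourier.const_mul 8
  rw [← integral_const_mul, ← integral_const_mul, ← integral_add hmass hgrad]
  exact integral_mono_of_nonneg (ae_of_all _ fun ξ => by positivity) (hmass.add hgrad)
    (ae_of_all _ hweight)

/-- Fix `s ∈ (1/2, 1)` and a cutoff `η` for `I_N`.  There is `C > 0`
(depending only on `s, η`) so that for every `N ≥ 1` and every Schwartz `g : ℝ³ → ℂ`,
`‖g‖²_{H^s} ≤ C ( E(I_N g) + ‖g‖²_{L²} )`. -/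
theorem Hs_bound_by_energy_I
    (s : ℝ) (hs : 1/2 < s) (hs1 : s < 1) (η : ℝ → ℝ) (hη : IsCutoff s η) :
    ∃ C > (0:ℝ), ∀ N ≥ (1:ℝ), ∀ g : SchwartzMap E3 ℂ,
      inhomSobSq s (fun x => g x)
        ≤ C * (energyE (Iop η N (fun x => g x)) + ∫ x : E3, Complex.normSq (g x)) := by
  refine ⟨4, by norm_num, fun N hN g => ?_⟩
  have hm := hasTemperateGrowth_cutoff_norm_div (E := E3) hη hs1.le (by linarith : 0 < N)
  set w := fourierMultiplierCLM ℂ (fun ξ : E3 => η (‖ξ‖ / N)) g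
  have hsob := hη.inhomSobSq_le (by linarith) hs1.le hN g
  have hmass : ∫ ξ, ‖𝓕 g ξ‖ ^ 2 = ∫ x, Complex.normSq (g x) := by
    simp [integral_norm_sq_fourier, Complex.normSq_eq_norm_sq]
  have hgrad := integral_sum_norm_sq_lineDerivOp (EuclideanSpace.basisFun (Fin 3) ℝ) w
  have henergy := integral_sum_norm_sq_lineDerivOp_le_energyE w
  have hpi : 1 ≤ π ^ 2 := by nlinarith [pi_gt_three]
  have hI : 0 ≤ ∫ ξ, ‖ξ‖ ^ 2 * ‖𝓕 w ξ‖ ^ 2 := integral_nonneg fun ξ => by positivity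
  have hM : 0 ≤ ∫ x, Complex.normSq (g x) := integral_nonneg fun x => Complex.normSq_nonneg _
  rw [Iop_eq_fourierMultiplierCLM hm]
  rw [hmass] at hsob
  nlinarith [mul_le_mul_of_nonneg_right hpi hI]
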